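/- arXiv:2203.07322 — 4 statements merged into one kernel-verified Lean document; each statement's English description precedes it below -/
import Mathlib

section
/- Fix an agent index i and a horizon of T rounds. Let Ω = Ω_1 × ⋯ × Ω_N be a product of nonempty measurable spaces (the agents' policy spaces), and for each round t = 1,…,T let P_t be a probability measure on Ω. Let V : Ω → ℝ and, for each t, U_t : Ω → ℝ be measurable functions bounded in absolute value by a constant B, and assume the pointwise domination V(π) ≤ U_t(π) for every π ∈ Ω and every t. Assume every deviation map D^i_d is measurable and that each P_t is a coarse correlated equilibrium for agent i with respect to the optimistic payoff U_t, i.e. ∫ U_t ∘ D^i_d dP_t ≤ ∫ U_t dP_t for every d ∈ Ω_i. Then agent i's dynamic regret satisfies ∑_{t=1}^T ( sup_{d ∈ Ω_i} ∫ V ∘ D^i_d dP_t − ∫ V dP_t ) ≤ ∑_{t=1}^T ∫ (U_t − V) dP_t. -/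
/-!
Each deviation payoff of `V` is at most the same deviation payoff of the dominating `U t`, and
the coarse correlated equilibrium condition bounds the latter by `∫ U t ∂P t`. Hence the
per-round regret `⨆ d, ∫ V ∘ D_d - ∫ V` is at most `∫ U t - ∫ V`; summing over rounds gives
the claim.
-/

open MeasureTheory

namespace MeasureTheory

variable {α ι : Type*} [MeasurableSpace α] {μ : Measure α}

theorem integrable_of_abs_le [IsFiniteMeasure μ] {f : α → ℝ} (hf : Measurable f) {B : ℝ}
    (hB : ∀ x, |f x| ≤ B) : Integrable f μ :=
  .of_bound hf.aestronglyMeasurable B (ae_of_all _ hB)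

theorem iSup_integral_comp_le_integral_of_le [Nonempty ι] {D : ι → α → α}
    {f g : α → ℝ} (hfg : f ≤ g) (hf : ∀ d, Integrable (fun x => f (D d x)) μ)
    (hg : ∀ d, Integrable (fun x => g (D d x)) μ)
    (hdev : ∀ d, ∫ x, g (D d x) ∂μ ≤ ∫ x, g x ∂μ) :
    ⨆ d, ∫ x, f (D d x) ∂μ ≤ ∫ x, g x ∂μ :=
  ciSup_le fun d =>
    (integral_mono (hf d) (hg d) fun x => hfg (D d x)).trans (hdev d)

theorem iSup_integral_comp_sub_integral_le_integral_sub [Nonempty ι] {D : ι → α → α}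
    {f g : α → ℝ} (hfg : f ≤ g) (hf : Integrable f μ) (hg : Integrable g μ)
    (hfD : ∀ d, Integrable (fun x => f (D d x)) μ)
    (hgD : ∀ d, Integrable (fun x => g (D d x)) μ)
    (hdev : ∀ d, ∫ x, g (D d x) ∂μ ≤ ∫ x, g x ∂μ) :
    (⨆ d, ∫ x, f (D d x) ∂μ) - ∫ x, f x ∂μ ≤ ∫ x, (g x - f x) ∂μ := by
  rw [integral_sub hg hf]
  linarith [iSup_integral_comp_le_integral_of_le hfg hfD hgD hdev]

end MeasureTheory

/-- game-theoretic core of Theorem 1 of the paper.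
Playing, at each of `T` rounds, a coarse correlated equilibrium (for agent `i`)
of the optimistic game `U t` which pointwise dominates the true payoff `V`
bounds the dynamic regret of agent `i` by the accumulated optimism gap. -/
theorem dynamic_regret_le_optimism_gap
    {N : ℕ} (Ω : Fin N → Type*) [∀ j, MeasurableSpace (Ω j)] [∀ j, Nonempty (Ω j)]
    (i : Fin N) (T : ℕ)
    (P : Fin T → Measure (∀ j, Ω j)) [∀ t, IsProbabilityMeasure (P t)]
    (V : (∀ j, Ω j) → ℝ) (U : Fin T → (∀ j, Ω j) → ℝ) (B : ℝ)
    (hVmeas : Measurable V) (hUmeas : ∀ t, Measurable (U t))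
    (hVbd : ∀ π, |V π| ≤ B) (hUbd : ∀ t π, |U t π| ≤ B)
    (hdom : ∀ (t : Fin T) (π : ∀ j, Ω j), V π ≤ U t π)
    (hDmeas : ∀ d : Ω i, Measurable (fun π : ∀ j, Ω j => Function.update π i d))
    (hCCE : ∀ (t : Fin T) (d : Ω i),
      ∫ π, U t (Function.update π i d) ∂(P t) ≤ ∫ π, U t π ∂(P t)) :
    ∑ t : Fin T,
        ((⨆ d : Ω i, ∫ π, V (Function.update π i d) ∂(P t)) - ∫ π, V π ∂(P t))
      ≤ ∑ t : Fin T, ∫ π, (U t π - V π) ∂(P t) := by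
  refine Finset.sum_le_sum fun t _ =>
    iSup_integral_comp_sub_integral_le_integral_sub (hdom t)
      (integrable_of_abs_le hVmeas hVbd) (integrable_of_abs_le (hUmeas t) (hUbd t))
      (fun d => integrable_of_abs_le (hVmeas.comp (hDmeas d)) fun π => hVbd _)
      (fun d => integrable_of_abs_le ((hUmeas t).comp (hDmeas d)) fun π => hUbd t _)
      (hCCE t)
end

section
/- Fix an agent index i and a horizon of T rounds. Let Ω = Ω_1 × ⋯ × Ω_N be a product of nonempty measurable spaces, for each round t = 1,…,T let P_t be a probability measure on Ω, and let ε_t ≥ 0. Let V : Ω → ℝ and, for each t, U_t : Ω → ℝ be measurable functions bounded in absolute value by a constant B, with V(π) ≤ U_t(π) for every π ∈ Ω and every t. Assume every deviation map D^i_d is measurable and that each P_t is an ε_t-approximate coarse correlated equilibrium for agent i with respect to U_t, i.e. ∫ U_t ∘ D^i_d dP_t ≤ ∫ U_t dP_t + ε_t for every d ∈ Ω_i. Then agent i's dynamic regret satisfies ∑_{t=1}^T ( sup_{d ∈ Ω_i} ∫ V ∘ D^i_d dP_t − ∫ V dP_t ) ≤ ∑_{t=1}^T ε_t + ∑_{t=1}^T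 ∫ (U_t − V) dP_t. -/
/-!
Each round is handled separately. Since `V ≤ U t` pointwise, every deviation `d` gains at most
`∫ U t ∘ D^i_d dP_t ≤ ∫ U t dP_t + ε t` against `V`, so the supremum over deviations is bounded
by the same quantity; subtracting `∫ V dP_t` and summing over the rounds gives the bound.
-/

open MeasureTheory

section Deviation

variable {ι : Type*} [DecidableEq ι] {Ω : ι → Type*} [∀ j, MeasurableSpace (Ω j)]

def IsApproxCCE (μ : Measure (∀ j, Ω j)) (U : (∀ j, Ω j) → ℝ) (i : ι) (ε : ℝ) : Prop :=
  ∀ d : Ω i, ∫ π, U (Function.update π i d) ∂μ ≤ (∫ π, U π ∂μ) + ε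

noncomputable def deviationRegret (μ : Measure (∀ j, Ω j)) (V : (∀ j, Ω j) → ℝ) (i : ι) : ℝ :=
  (⨆ d : Ω i, ∫ π, V (Function.update π i d) ∂μ) - ∫ π, V π ∂μ

variable {μ : Measure (∀ j, Ω j)} {U V : (∀ j, Ω j) → ℝ} {i : ι} {ε : ℝ}

theorem IsApproxCCE.iSup_integral_deviation_le [Nonempty (Ω i)] (hCCE : IsApproxCCE μ U i ε)
    (hdom : V ≤ U) (hVD : ∀ d : Ω i, Integrable (fun π => V (Function.update π i d)) μ)
    (hUD : ∀ d : Ω i, Integrable (fun π => U (Function.update π i d)) μ) :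
    ⨆ d : Ω i, ∫ π, V (Function.update π i d) ∂μ ≤ (∫ π, U π ∂μ) + ε :=
  ciSup_le fun d =>
    (integral_mono (hVD d) (hUD d) fun _ => hdom _).trans (hCCE d)

theorem IsApproxCCE.deviationRegret_le [Nonempty (Ω i)] (hCCE : IsApproxCCE μ U i ε)
    (hdom : V ≤ U) (hV : Integrable V μ) (hU : Integrable U μ)
    (hVD : ∀ d : Ω i, Integrable (fun π => V (Function.update π i d)) μ)
    (hUD : ∀ d : Ω i, Integrable (fun π => U (Function.update π i d)) μ) :
    deviationRegret μ V i ≤ ε + ∫ π, (U π - V π) ∂μ := by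
  have hsup := hCCE.iSup_integral_deviation_le hdom hVD hUD
  rw [deviationRegret, integral_sub hU hV]
  linarith

end Deviation

theorem MeasureTheory.Integrable.of_measurable_of_abs_le {α : Type*} [MeasurableSpace α]
    {μ : Measure α} [IsFiniteMeasure μ] {f : α → ℝ} (hf : Measurable f) {B : ℝ}
    (hB : ∀ x, |f x| ≤ B) : Integrable f μ :=
  .of_bound hf.aestronglyMeasurable B (.of_forall hB)

theorem dynamic_regret_le_eps_plus_optimism_gap_general
    {N : ℕ} (Ω : Fin N → Type*) [∀ j, MeasurableSpace (Ω j)] [∀ j, Nonempty (Ω j)]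
    (i : Fin N) (T : ℕ)
    (P : Fin T → Measure (∀ j, Ω j)) [∀ t, IsProbabilityMeasure (P t)]
    (ε : Fin T → ℝ)
    (V : (∀ j, Ω j) → ℝ) (U : Fin T → (∀ j, Ω j) → ℝ) (B : ℝ)
    (hVmeas : Measurable V) (hUmeas : ∀ t, Measurable (U t))
    (hVbd : ∀ π, |V π| ≤ B) (hUbd : ∀ t π, |U t π| ≤ B)
    (hdom : ∀ (t : Fin T) (π : ∀ j, Ω j), V π ≤ U t π)
    (hDmeas : ∀ d : Ω i, Measurable (fun π : ∀ j, Ω j => Function.update π i d))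
    (hCCE : ∀ (t : Fin T) (d : Ω i),
      ∫ π, U t (Function.update π i d) ∂(P t) ≤ (∫ π, U t π ∂(P t)) + ε t) :
    ∑ t : Fin T,
        ((⨆ d : Ω i, ∫ π, V (Function.update π i d) ∂(P t)) - ∫ π, V π ∂(P t))
      ≤ (∑ t : Fin T, ε t) + ∑ t : Fin T, ∫ π, (U t π - V π) ∂(P t) := by
  rw [← Finset.sum_add_distrib]
  refine Finset.sum_le_sum fun t _ => ?_
  exact IsApproxCCE.deviationRegret_le (hCCE t) (hdom t)
    (.of_measurable_of_abs_le hVmeas hVbd) (.of_measurable_of_abs_le (hUmeas t) (hUbd t))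
    (fun d => .of_measurable_of_abs_le (hVmeas.comp (hDmeas d)) fun _ => hVbd _)
    (fun d => .of_measurable_of_abs_le ((hUmeas t).comp (hDmeas d)) fun _ => hUbd t _)

/-- game-theoretic core of Theorem 4 of the paper, approximate CCEs.
Playing, at each of `T` rounds, an `ε t`-approximate coarse correlated equilibrium
(for agent `i`) of the optimistic game `U t` which pointwise dominates the true payoff `V`
bounds the dynamic regret of agent `i` by `∑ ε t` plus the accumulated optimism gap. -/
theorem dynamic_regret_le_eps_plus_optimism_gap
    {N : ℕ} (Ω : Fin N → Type*) [∀ j, MeasurableSpace (Ω j)] [∀ j, Nonempty (Ω j)]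
    (i : Fin N) (T : ℕ)
    (P : Fin T → Measure (∀ j, Ω j)) [∀ t, IsProbabilityMeasure (P t)]
    (ε : Fin T → ℝ) (hε : ∀ t, 0 ≤ ε t)
    (V : (∀ j, Ω j) → ℝ) (U : Fin T → (∀ j, Ω j) → ℝ) (B : ℝ)
    (hVmeas : Measurable V) (hUmeas : ∀ t, Measurable (U t))
    (hVbd : ∀ π, |V π| ≤ B) (hUbd : ∀ t π, |U t π| ≤ B)
    (hdom : ∀ (t : Fin T) (π : ∀ j, Ω j), V π ≤ U t π)
    (hDmeas : ∀ d : Ω i, Measurable (fun π : ∀ j, Ω j => Function.update π i d))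
    (hCCE : ∀ (t : Fin T) (d : Ω i),
      ∫ π, U t (Function.update π i d) ∂(P t) ≤ (∫ π, U t π ∂(P t)) + ε t) :
    ∑ t : Fin T,
        ((⨆ d : Ω i, ∫ π, V (Function.update π i d) ∂(P t)) - ∫ π, V π ∂(P t))
      ≤ (∑ t : Fin T, ε t) + ∑ t : Fin T, ∫ π, (U t π - V π) ∂(P t) :=
  dynamic_regret_le_eps_plus_optimism_gap_general Ω i T P ε V U B hVmeas hUmeas hVbd hUbd hdom
    hDmeas hCCE
end

section
/- Let E be a normed vector space, let g, g̃ : E → E, let ε : E → ℝ, let w : ℕ → E be a fixed sequence, and let s, s̃ : ℕ → E be sequences with s_0 = s̃_0, s_{h+1} = g(s_h) + w_h and s̃_{h+1} = g̃(s̃_h) + w_h for all h ≥ 0. Assume: (i) g is Lipschitz with constant L ≥ 0; (ii) ‖g(x) − g̃(x)‖ ≤ ε(x) for all x ∈ E; (iii) ε is Lipschitz with constant L_ε ≥ 0, i.e. |ε(x) − ε(y)| ≤ L_ε ‖x − y‖ for all x, y. Set L̄ = 1 + L + L_ε. Then for every h ≥ 1, ‖s_h − s̃_h‖ ≤ L̄^{h−1}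 · ∑_{τ=0}^{h−1} ε(s_τ). -/
/-! Through the triangle inequality via `g (s̃ h)`, and moving `ε` from `s̃ h` to `s h` at the
cost `Lε ‖s h - s̃ h‖`, the gap `d h = ‖s h - s̃ h‖` obeys `d (h+1) ≤ (L + Lε) d h + ε (s h)`
with `d 0 = 0`; unrolling this recursion gives the bound. -/

theorem le_one_add_pow_mul_sum_of_le_mul_add {d e : ℕ → ℝ} {K : ℝ} (hK : 0 ≤ K)
    (he : ∀ n, 0 ≤ e n) (hd₀ : d 0 = 0) (hd : ∀ n, d (n + 1) ≤ K * d n + e n) (n : ℕ) :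
    d (n + 1) ≤ (1 + K) ^ n * ∑ τ ∈ Finset.range (n + 1), e τ := by
  induction n with
  | zero => simpa [hd₀] using hd 0
  | succ n ih =>
    have hS : 0 ≤ ∑ τ ∈ Finset.range (n + 1), e τ := Finset.sum_nonneg fun τ _ => he τ
    have hpow : 1 ≤ (1 + K) ^ (n + 1) := one_le_pow₀ (by linarith)
    calc d (n + 2)
        ≤ K * ((1 + K) ^ n * ∑ τ ∈ Finset.range (n + 1), e τ) + e (n + 1) :=
          (hd (n + 1)).trans (by gcongr)
      _ ≤ (1 + K) * ((1 + K) ^ n * ∑ τ ∈ Finset.range (n + 1), e τ)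
            + (1 + K) ^ (n + 1) * e (n + 1) := by
          gcongr
          · linarith
          · exact le_mul_of_one_le_left (he _) hpow
      _ = (1 + K) ^ (n + 1) * ∑ τ ∈ Finset.range (n + 2), e τ := by
          rw [Finset.sum_range_succ _ (n + 1)]
          ring

theorem norm_sub_le_mul_add_deviation {E : Type*} [SeminormedAddCommGroup E]
    {g gt : E → E} {ε : E → ℝ} {L Lε : ℝ}
    (hg : ∀ x y : E, ‖g x - g y‖ ≤ L * ‖x - y‖)
    (hdev : ∀ x : E, ‖g x - gt x‖ ≤ ε x)
    (hε : ∀ x y : E, |ε x - ε y| ≤ Lε * ‖x - y‖) (x y : E) :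
    ‖g x - gt y‖ ≤ (L + Lε) * ‖x - y‖ + ε x := by
  have hεy : ε y ≤ ε x + Lε * ‖x - y‖ := by
    linarith [neg_abs_le (ε x - ε y), hε x y]
  calc ‖g x - gt y‖
      ≤ ‖g x - g y‖ + ‖g y - gt y‖ := norm_sub_le_norm_sub_add_norm_sub _ _ _
    _ ≤ L * ‖x - y‖ + (ε x + Lε * ‖x - y‖) := add_le_add (hg x y) ((hdev y).trans hεy)
    _ = (L + Lε) * ‖x - y‖ + ε x := by ring

theorem trajectory_divergence_general
    {E : Type*} [NormedAddCommGroup E]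
    (g gt : E → E) (ε : E → ℝ) (w : ℕ → E) (s st : ℕ → E)
    (L Lε : ℝ) (hL : 0 ≤ L) (hLε : 0 ≤ Lε)
    (h0 : s 0 = st 0)
    (hs : ∀ h : ℕ, s (h + 1) = g (s h) + w h)
    (hst : ∀ h : ℕ, st (h + 1) = gt (st h) + w h)
    (hg : ∀ x y : E, ‖g x - g y‖ ≤ L * ‖x - y‖)
    (hdev : ∀ x : E, ‖g x - gt x‖ ≤ ε x)
    (hε : ∀ x y : E, |ε x - ε y| ≤ Lε * ‖x - y‖) :
    ∀ h : ℕ, 1 ≤ h →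
      ‖s h - st h‖ ≤ (1 + L + Lε) ^ (h - 1) * ∑ τ ∈ Finset.range h, ε (s τ) := by
  intro h hh
  obtain ⟨n, rfl⟩ := Nat.exists_eq_add_of_le' hh
  rw [Nat.add_sub_cancel, add_assoc]
  refine le_one_add_pow_mul_sum_of_le_mul_add (d := fun n => ‖s n - st n‖)
    (add_nonneg hL hLε) (fun τ => (norm_nonneg _).trans (hdev _)) (by simp [h0]) (fun n => ?_) n
  rw [hs, hst, add_sub_add_right_eq_sub]
  exact norm_sub_le_mul_add_deviation hg hdev hε _ _

/-- deterministic trajectory-divergence bound, used in Lemma 2.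
Two trajectories driven by the same noise sequence `w` but by dynamics `g`
(`L`-Lipschitz) and `g̃` (whose pointwise deviation from `g` is bounded by the
`L_ε`-Lipschitz function `ε`) satisfy
`‖s_h − s̃_h‖ ≤ (1 + L + L_ε)^(h−1) ∑_{τ<h} ε (s_τ)` for every `h ≥ 1`. -/
theorem trajectory_divergence
    {E : Type*} [NormedAddCommGroup E] [NormedSpace ℝ E]
    (g gt : E → E) (ε : E → ℝ) (w : ℕ → E) (s st : ℕ → E)
    (L Lε : ℝ) (hL : 0 ≤ L) (hLε : 0 ≤ Lε)
    (h0 : s 0 = st 0)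
    (hs : ∀ h : ℕ, s (h + 1) = g (s h) + w h)
    (hst : ∀ h : ℕ, st (h + 1) = gt (st h) + w h)
    (hg : ∀ x y : E, ‖g x - g y‖ ≤ L * ‖x - y‖)
    (hdev : ∀ x : E, ‖g x - gt x‖ ≤ ε x)
    (hε : ∀ x y : E, |ε x - ε y| ≤ Lε * ‖x - y‖) :
    ∀ h : ℕ, 1 ≤ h →
      ‖s h - st h‖ ≤ (1 + L + Lε) ^ (h - 1) * ∑ τ ∈ Finset.range h, ε (s τ) :=
  trajectory_divergence_general g gt ε w s st L Lε hL hLε h0 hs hst hg hdev hε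
end

section
/- Let p, q, N, H be positive integers, S = ℝ^p, A = (ℝ^q)^N, X = S × A, and let β > 0, f, μ : X → S and σ : X → ℝ^p satisfy σ(x)_j ≥ 0 and |f(x)_j − μ(x)_j| ≤ β σ(x)_j for all x ∈ X and all coordinates j. Let r : X → ℝ be bounded, |r(x)| ≤ B for all x. Fix a joint policy π : S → A, an initial state s_0 ∈ S, and a noise sequence w : ℕ → ℝ^p. Define the true value V = ∑_{h=0}^{H−1} r(s_h, π(s_h)) along the true trajectory s_{h+1} = f(s_h, π(s_h)) + w_h, and define the hallucinated upper confidence value UCB as the supremum, over all functions η : X → ℝ^p with η(x)_j ∈ [−1,1] for all x, j, of ∑_{h=0}^{H−1} r(s̃_h, π(s̃_h)), where s̃_0 = s_0 and s̃_{h+1,j} = μ(s̃_h, π(s̃_h))_j + β σ(s̃_h, π(s̃_h))_j · η(s̃_h, π(s̃_h))_j + w_{h,j}. Then the set over which the supremum is taken is nonempty and bounded above, and V ≤ UCB. -/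
noncomputable section

/-- The state space `ℝ^p` with the Euclidean norm. -/
abbrev Sp (p : ℕ) : Type := EuclideanSpace ℝ (Fin p)

/-- The joint action space `(ℝ^q)^N` with the ℓ2 norm. -/
abbrev Ac (q N : ℕ) : Type := PiLp 2 (fun _ : Fin N => EuclideanSpace ℝ (Fin q))

/-- The joint state-action space `X = S × A` with the ℓ2 norm
`‖(s,a)‖ = sqrt (‖s‖² + ∑ᵢ ‖aⁱ‖²)`. -/
abbrev Xsp (p q N : ℕ) : Type := WithLp 2 (Sp p × Ac q N)

/-- The joint policy `s ↦ (π¹ s, …, π^N s)` built from individual policies. -/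
def jointOf {p q N : ℕ} (π : Fin N → Sp p → EuclideanSpace ℝ (Fin q)) :
    Sp p → Ac q N := fun s => WithLp.toLp 2 (fun i => π i s)

/-- The true trajectory: `s_0 = s0`, `s_{h+1} = f (s_h, pol s_h) + w_h`. -/
def trueTraj {p q N : ℕ} (f : Xsp p q N → Sp p) (pol : Sp p → Ac q N)
    (w : ℕ → Sp p) (s0 : Sp p) : ℕ → Sp p
  | 0 => s0
  | h + 1 => f (WithLp.toLp 2 (trueTraj f pol w s0 h, pol (trueTraj f pol w s0 h))) + w h

/-- The hallucinated trajectory: `s̃_0 = s0` and, coordinatewise,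
`s̃_{h+1,j} = μ(x̃_h)_j + β σ(x̃_h)_j η(x̃_h)_j + w_{h,j}` with
`x̃_h = (s̃_h, pol s̃_h)`. -/
def halTraj {p q N : ℕ} (μ σ : Xsp p q N → Sp p) (β : ℝ)
    (η : Xsp p q N → Sp p) (pol : Sp p → Ac q N) (w : ℕ → Sp p) (s0 : Sp p) :
    ℕ → Sp p
  | 0 => s0
  | h + 1 =>
      (WithLp.toLp 2 (fun j => μ (WithLp.toLp 2 (halTraj μ σ β η pol w s0 h, pol (halTraj μ σ β η pol w s0 h))) j
          + β * σ (WithLp.toLp 2 (halTraj μ σ β η pol w s0 h, pol (halTraj μ σ β η pol w s0 h))) j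
              * η (WithLp.toLp 2 (halTraj μ σ β η pol w s0 h, pol (halTraj μ σ β η pol w s0 h))) j
          + w h j) : Sp p)

/-- Cumulative reward of a trajectory over horizon `H` under policy `pol`. -/
def cumReward {p q N : ℕ} (r : Xsp p q N → ℝ) (pol : Sp p → Ac q N)
    (traj : ℕ → Sp p) (H : ℕ) : ℝ :=
  ∑ h ∈ Finset.range H, r (WithLp.toLp 2 (traj h, pol (traj h)))

/-- The set of cumulative rewards attainable by hallucinated trajectories,
over all auxiliary functions `η` valued in `[−1,1]^p`.  Its supremum is the
hallucinated upper confidence value `UCB`, its infimum the lower one `LCB`. -/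
def halSet {p q N : ℕ} (μ σ : Xsp p q N → Sp p) (β : ℝ) (r : Xsp p q N → ℝ)
    (pol : Sp p → Ac q N) (w : ℕ → Sp p) (s0 : Sp p) (H : ℕ) : Set ℝ :=
  {y | ∃ η : Xsp p q N → Sp p,
    (∀ (x : Xsp p q N) (j : Fin p), η x j ∈ Set.Icc (-1 : ℝ) 1) ∧
    y = cumReward r pol (halTraj μ σ β η pol w s0) H}

theorem abs_div_le_one_of_abs_le {x c : ℝ} (h : |x| ≤ c) : |x / c| ≤ 1 := by
  rw [abs_div]
  exact div_le_one_of_le₀ (h.trans (le_abs_self c)) (abs_nonneg c)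

theorem mul_div_cancel_of_abs_le {x c : ℝ} (h : |x| ≤ c) : c * (x / c) = x := by
  rcases eq_or_ne c 0 with rfl | hc
  · rw [zero_mul, abs_nonpos_iff.mp h]
  · exact mul_div_cancel₀ x hc

section Hallucination

variable {p q N : ℕ}

/-- The auxiliary function under which the hallucinated model reproduces `f`: where `β σ = 0`,
calibration forces `f = μ` and the junk value `t / 0 = 0` is harmless. -/
def calibratingAux (f μ σ : Xsp p q N → Sp p) (β : ℝ) : Xsp p q N → Sp p :=
  fun x => WithLp.toLp 2 (fun j => (f x j - μ x j) / (β * σ x j))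

variable {f μ σ : Xsp p q N → Sp p} {β : ℝ}

theorem calibratingAux_mem_Icc (hcal : ∀ x j, |f x j - μ x j| ≤ β * σ x j) (x : Xsp p q N)
    (j : Fin p) : calibratingAux f μ σ β x j ∈ Set.Icc (-1 : ℝ) 1 :=
  abs_le.mp (abs_div_le_one_of_abs_le (hcal x j))

theorem add_mul_calibratingAux (hcal : ∀ x j, |f x j - μ x j| ≤ β * σ x j) (x : Xsp p q N)
    (j : Fin p) : μ x j + β * σ x j * calibratingAux f μ σ β x j = f x j := by
  rw [calibratingAux, PiLp.toLp_apply, mul_div_cancel_of_abs_le (hcal x j), add_sub_cancel]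

theorem halTraj_eq_trueTraj {η : Xsp p q N → Sp p}
    (hη : ∀ x j, μ x j + β * σ x j * η x j = f x j) (pol : Sp p → Ac q N)
    (w : ℕ → Sp p) (s0 : Sp p) : halTraj μ σ β η pol w s0 = trueTraj f pol w s0 := by
  funext h
  induction h with
  | zero => rfl
  | succ h ih =>
    ext j
    simp only [halTraj, trueTraj, ih, hη, PiLp.add_apply, PiLp.toLp_apply]

theorem cumReward_trueTraj_mem_halSet (hcal : ∀ x j, |f x j - μ x j| ≤ β * σ x j)
    (r : Xsp p q N → ℝ) (pol : Sp p → Ac q N) (w : ℕ → Sp p) (s0 : Sp p) (H : ℕ) :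
    cumReward r pol (trueTraj f pol w s0) H ∈ halSet μ σ β r pol w s0 H :=
  ⟨calibratingAux f μ σ β, calibratingAux_mem_Icc hcal,
    by rw [halTraj_eq_trueTraj (add_mul_calibratingAux hcal)]⟩

theorem cumReward_le {r : Xsp p q N → ℝ} {B : ℝ} (hr : ∀ x, r x ≤ B)
    (pol : Sp p → Ac q N) (traj : ℕ → Sp p) (H : ℕ) : cumReward r pol traj H ≤ H * B :=
  calc cumReward r pol traj H ≤ ∑ _h ∈ Finset.range H, B :=
        Finset.sum_le_sum fun _ _ => hr _
    _ = H * B := by simp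

theorem bddAbove_halSet {r : Xsp p q N → ℝ} {B : ℝ} (hr : ∀ x, r x ≤ B)
    (pol : Sp p → Ac q N) (w : ℕ → Sp p) (s0 : Sp p) (H : ℕ) :
    BddAbove (halSet μ σ β r pol w s0 H) := by
  refine ⟨H * B, ?_⟩
  rintro _ ⟨η, -, rfl⟩
  exact cumReward_le hr pol _ H

end Hallucination

theorem value_le_UCB_general
    (p q N H : ℕ)
    (β B : ℝ)
    (f μ σ : Xsp p q N → Sp p)
    (hcal : ∀ (x : Xsp p q N) (j : Fin p), |f x j - μ x j| ≤ β * σ x j)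
    (r : Xsp p q N → ℝ) (hrB : ∀ x, |r x| ≤ B)
    (pol : Sp p → Ac q N) (s0 : Sp p) (w : ℕ → Sp p) :
    (halSet μ σ β r pol w s0 H).Nonempty ∧
    BddAbove (halSet μ σ β r pol w s0 H) ∧
    cumReward r pol (trueTraj f pol w s0) H ≤ sSup (halSet μ σ β r pol w s0 H) := by
  have hmem := cumReward_trueTraj_mem_halSet hcal r pol w s0 H
  have hbdd : BddAbove (halSet μ σ β r pol w s0 H) :=
    bddAbove_halSet (fun x => (le_abs_self (r x)).trans (hrB x)) pol w s0 H
  exact ⟨⟨_, hmem⟩, hbdd, le_csSup hbdd hmem⟩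

/-- Lemma 1 of the paper, confidence lemma, pathwise.
Under calibration, the set of hallucinated cumulative rewards is nonempty and
bounded above, and the true value `V` is at most its supremum `UCB`. -/
theorem value_le_UCB
    (p q N H : ℕ) (hp : 0 < p) (hq : 0 < q) (hN : 0 < N) (hH : 0 < H)
    (β B : ℝ) (hβ : 0 < β)
    (f μ σ : Xsp p q N → Sp p)
    (hσ : ∀ (x : Xsp p q N) (j : Fin p), 0 ≤ σ x j)
    (hcal : ∀ (x : Xsp p q N) (j : Fin p), |f x j - μ x j| ≤ β * σ x j)
    (r : Xsp p q N → ℝ) (hrB : ∀ x, |r x| ≤ B)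
    (pol : Sp p → Ac q N) (s0 : Sp p) (w : ℕ → Sp p) :
    (halSet μ σ β r pol w s0 H).Nonempty ∧
    BddAbove (halSet μ σ β r pol w s0 H) ∧
    cumReward r pol (trueTraj f pol w s0) H ≤ sSup (halSet μ σ β r pol w s0 H) :=
  value_le_UCB_general p q N H β B f μ σ hcal r hrB pol s0 w

end
end
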